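/- Define K_n := ∫_0^∞ (ln(1+x))^n e^{-x} dx for n ≥ 1. Then K_n^{1/n} = (ln(n+1)) · (1 + o(1)) as n → ∞; that is, the quotient K_n^{1/n} / ln(n+1) tends to 1 as n → ∞. -/

import Mathlib

/-!
Write `L = log (n + 1)`. For the lower bound, the integrand is at least `log u ^ n * exp (-u)`
on `(u - 1, u]`; taking `u = (n + 1) / L` gives `Kₙ^{1/n} ≥ (L - log L) exp (-(1 + 1/n) / L)`.
For the upper bound, the tangent line of `log` at `n + 1` gives `log (1 + x) ≤ L + x / n
≤ L exp (x / (n L))`, so `Kₙ ≤ Lⁿ ∫ exp (-(1 - 1/L) x) dx ≤ 2 Lⁿ` once `L ≥ 2`, and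
`Kₙ^{1/n} ≤ 2^{1/n} L`.
-/

open MeasureTheory Filter Topology Real Set

noncomputable def logMoment (n : ℕ) : ℝ :=
  ∫ x in Ioi (0 : ℝ), log (1 + x) ^ n * exp (-x)

lemma log_one_add_nonneg {x : ℝ} (hx : 0 ≤ x) : 0 ≤ log (1 + x) :=
  log_nonneg (by linarith)

lemma log_one_add_pow_mul_exp_neg_nonneg (n : ℕ) {x : ℝ} (hx : 0 ≤ x) :
    0 ≤ log (1 + x) ^ n * exp (-x) := by
  have := log_one_add_nonneg hx
  positivity

lemma integrableOn_log_one_add_pow_mul_exp_neg (n : ℕ) :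
    IntegrableOn (fun x ↦ log (1 + x) ^ n * exp (-x)) (Ioi 0) := by
  have hGamma : IntegrableOn (fun x ↦ exp (-x) * x ^ ((n + 1 : ℝ) - 1)) (Ioi 0) :=
    GammaIntegral_convergent (by positivity)
  refine hGamma.mono' (by fun_prop) ?_
  filter_upwards [ae_restrict_mem measurableSet_Ioi] with x (hx : 0 < x)
  have hlog : log (1 + x) ≤ x := by linarith [log_le_sub_one_of_pos (by linarith : 0 < 1 + x)]
  rw [add_sub_cancel_right, rpow_natCast,
    norm_of_nonneg (log_one_add_pow_mul_exp_neg_nonneg n hx.le), mul_comm (exp _)]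
  gcongr
  exact log_one_add_nonneg hx.le

lemma logMoment_nonneg (n : ℕ) : 0 ≤ logMoment n :=
  setIntegral_nonneg measurableSet_Ioi fun _ hx ↦
    log_one_add_pow_mul_exp_neg_nonneg n (le_of_lt hx)

lemma log_pow_mul_exp_neg_le_logMoment (n : ℕ) {u : ℝ} (hu : 1 ≤ u) :
    log u ^ n * exp (-u) ≤ logMoment n := by
  have hsub : Ioc (u - 1) u ⊆ Ioi 0 := fun x hx ↦ mem_Ioi.2 (by linarith [hx.1])
  have hint := integrableOn_log_one_add_pow_mul_exp_neg n
  calc log u ^ n * exp (-u)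
      ≤ ∫ x in Ioc (u - 1) u, log (1 + x) ^ n * exp (-x) := by
        have := setIntegral_ge_of_const_le measurableSet_Ioc (by simp)
          (fun x hx ↦ ?_) (hint.mono_set hsub) (c := log u ^ n * exp (-u))
        · simpa using this
        · have hlog : log u ≤ log (1 + x) := log_le_log (by linarith) (by linarith [hx.1])
          have := log_nonneg hu
          have := this.trans hlog
          gcongr
          exact hx.2
    _ ≤ logMoment n :=
        setIntegral_mono_set hint
          (ae_restrict_of_forall_mem measurableSet_Ioi fun _ hx ↦
            log_one_add_pow_mul_exp_neg_nonneg n (le_of_lt hx))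
          hsub.eventuallyLE

lemma log_le_log_add_sub_div {y z : ℝ} (hy : 0 < y) (hz : 0 < z) :
    log y ≤ log z + (y - z) / z := by
  have h := log_le_sub_one_of_pos (div_pos hy hz)
  rw [log_div hy.ne' hz.ne', div_sub_one hz.ne'] at h
  linarith

lemma log_one_add_pow_le_mul_exp {n : ℕ} (hn : n ≠ 0) {x : ℝ} (hx : 0 ≤ x) :
    log (1 + x) ^ n ≤ log (n + 1) ^ n * exp (x / log (n + 1)) := by
  set L := log ((n : ℝ) + 1)
  have hn' : (0 : ℝ) < n := by positivity
  have hL : 0 < L := log_pos (by linarith)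
  have htangent : log (1 + x) ≤ L * (x / (n * L) + 1) := by
    have h := log_le_log_add_sub_div (y := 1 + x) (z := n + 1) (by linarith) (by linarith)
    have hslope : (1 + x - (n + 1)) / (n + 1) ≤ x / n := by
      rw [div_le_div_iff₀ (by linarith) hn']
      nlinarith
    calc log (1 + x) ≤ L + x / n := by linarith
      _ = L * (x / (n * L) + 1) := by field_simp; ring
  calc log (1 + x) ^ n ≤ (L * exp (x / (n * L))) ^ n := by
        gcongr
        · exact log_one_add_nonneg hx
        · exact htangent.trans (by gcongr; exact add_one_le_exp _)
    _ = L ^ n * exp (x / L) := by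
        rw [mul_pow, ← exp_nat_mul]
        congr 2
        field_simp

lemma logMoment_le_two_mul {n : ℕ} (hL : 2 ≤ log (n + 1)) :
    logMoment n ≤ 2 * log (n + 1) ^ n := by
  set L := log ((n : ℝ) + 1)
  have hn : n ≠ 0 := by rintro rfl; norm_num [L] at hL
  have hrate : 1 / L - 1 < 0 := by
    rw [sub_neg, div_lt_one (by linarith)]
    linarith
  calc logMoment n ≤ ∫ x in Ioi (0 : ℝ), L ^ n * exp ((1 / L - 1) * x) := by
        refine setIntegral_mono_on (integrableOn_log_one_add_pow_mul_exp_neg n)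
          ((integrableOn_exp_mul_Ioi hrate 0).const_mul _) measurableSet_Ioi
          fun x (hx : 0 < x) ↦ ?_
        calc log (1 + x) ^ n * exp (-x) ≤ L ^ n * exp (x / L) * exp (-x) := by
              gcongr
              exact log_one_add_pow_le_mul_exp hn hx.le
          _ = L ^ n * exp ((1 / L - 1) * x) := by
              rw [mul_assoc, ← exp_add]
              ring_nf
    _ = L ^ n / (1 - 1 / L) := by
        rw [integral_const_mul, integral_exp_mul_Ioi hrate, mul_zero, exp_zero, neg_div,
          ← div_neg, neg_sub, mul_one_div]
    _ ≤ 2 * L ^ n := by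
        rw [div_le_iff₀ (by linarith [hrate])]
        have : 1 / L ≤ 1 / 2 := one_div_le_one_div_of_le two_pos hL
        nlinarith [pow_pos (by linarith : 0 < L) n]

lemma logMoment_root_div_log_le {n : ℕ} (hL : 2 ≤ log (n + 1)) :
    logMoment n ^ (1 / n : ℝ) / log (n + 1) ≤ 2 ^ (1 / n : ℝ) := by
  set L := log ((n : ℝ) + 1)
  have hn : n ≠ 0 := by rintro rfl; norm_num [L] at hL
  rw [div_le_iff₀ (by linarith)]
  calc logMoment n ^ (1 / n : ℝ) ≤ (2 * L ^ n) ^ (1 / n : ℝ) :=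
        rpow_le_rpow (logMoment_nonneg n) (logMoment_le_two_mul hL) (by positivity)
    _ = 2 ^ (1 / n : ℝ) * L := by
        rw [mul_rpow two_pos.le (by positivity), one_div, pow_rpow_inv_natCast (by linarith) hn]

lemma le_logMoment_root_div_log {n : ℕ} (hn : n ≠ 0) :
    (1 - log (log (n + 1)) / log (n + 1)) * exp (-(1 + 1 / n) / log (n + 1)) ≤
      logMoment n ^ (1 / n : ℝ) / log (n + 1) := by
  set L := log ((n : ℝ) + 1)
  have hn' : (0 : ℝ) < n := by positivity
  have hL : 0 < L := log_pos (by linarith)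
  have hLn : L ≤ n := by linarith [log_le_sub_one_of_pos (by linarith : (0 : ℝ) < n + 1)]
  set u := (n + 1) / L
  have hu : 1 ≤ u := (one_le_div hL).2 (by linarith)
  have hlog_u : log u = L - log L := log_div (by positivity) hL.ne'
  have h := rpow_le_rpow (by have := log_nonneg hu; positivity)
    (log_pow_mul_exp_neg_le_logMoment n hu) (by positivity : (0 : ℝ) ≤ 1 / n)
  rw [mul_rpow (pow_nonneg (log_nonneg hu) n) (exp_pos _).le, one_div,
    pow_rpow_inv_natCast (log_nonneg hu) hn, ← exp_mul] at h
  rw [le_div_iff₀ hL, one_div]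
  have hexponent : -u * (n : ℝ)⁻¹ = -(1 + (n : ℝ)⁻¹) / L := by
    simp only [u]
    field_simp
  rw [hlog_u, hexponent] at h
  refine le_of_eq_of_le ?_ h
  field_simp

lemma tendsto_log_natCast_add_one_atTop :
    Tendsto (fun n : ℕ ↦ log ((n : ℝ) + 1)) atTop atTop :=
  tendsto_log_atTop.comp (tendsto_atTop_add_const_right _ 1 tendsto_natCast_atTop_atTop)

lemma tendsto_rpow_one_div_natCast {c : ℝ} (hc : c ≠ 0) :
    Tendsto (fun n : ℕ ↦ c ^ (1 / n : ℝ)) atTop (𝓝 1) := by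
  simpa [Function.comp_def] using
    (continuousAt_const_rpow hc).tendsto.comp tendsto_one_div_atTop_nhds_zero_nat

/-- With `Kₙ = ∫_0^∞ (ln(1+x))ⁿ e^{-x} dx`, one has
`Kₙ^{1/n} = ln(n+1) (1 + o(1))` as `n → ∞`, i.e. `Kₙ^{1/n} / ln(n+1) → 1`. -/
theorem K_root_asymptotics
    (K : ℕ → ℝ)
    (hK : ∀ n : ℕ, K n = ∫ x in Set.Ioi (0 : ℝ), (Real.log (1 + x)) ^ n * Real.exp (-x)) :
    Tendsto (fun n : ℕ => K n ^ ((1 : ℝ) / n) / Real.log (n + 1)) atTop (𝓝 1) := by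
  obtain rfl : K = logMoment := funext hK
  have hL := tendsto_log_natCast_add_one_atTop
  have hlower : Tendsto (fun n : ℕ ↦ (1 - log (log (n + 1)) / log (n + 1)) *
      exp (-(1 + 1 / n) / log (n + 1))) atTop (𝓝 1) := by
    have hloglog : Tendsto (fun n : ℕ ↦ log (log (n + 1)) / log (n + 1)) atTop (𝓝 0) :=
      isLittleO_log_id_atTop.tendsto_div_nhds_zero.comp hL
    have hexponent : Tendsto (fun n : ℕ ↦ -(1 + 1 / n) / log (n + 1)) atTop (𝓝 0) :=
      (tendsto_const_nhds.add tendsto_one_div_atTop_nhds_zero_nat).neg.div_atTop hL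
    simpa using (tendsto_const_nhds.sub hloglog).mul ((continuous_exp.tendsto 0).comp hexponent)
  refine tendsto_of_tendsto_of_tendsto_of_le_of_le' hlower (tendsto_rpow_one_div_natCast two_ne_zero)
    ?_ ?_
  · filter_upwards [eventually_ne_atTop 0] with n hn using le_logMoment_root_div_log hn
  · filter_upwards [hL.eventually_ge_atTop 2] with n hn using logMoment_root_div_log_le hn
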